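/- If v: ℝ^n → ℝ is twice continuously differentiable and satisfies the nonlinear PDE 0 = q + v_x'f - (1/2)v_x' G R^{-1} G' v_x + (1/2)tr(v_xx BB'), and λ > 0 satisfies λ G(x)R(x)^{-1}G(x)' = B(x)B(x)' for all x, then the desirability function ψ(x) = exp(-v(x)/λ) satisfies the linear PDE 0 = -(1/λ)q(x)ψ + f(x)'ψ_x + (1/2)tr(ψ_xx B(x)B(x)'). -/

import Mathlib

/-!
Logarithmic (Hopf–Cole) transform. For `ψ = exp (c v)` the chain rule gives
`ψₓ = c ψ vₓ` and `ψₓₓ = c ψ (vₓₓ + c vₓ vₓᵀ)`, so the linear operator applied to `ψ` equals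
`c ψ` times the HJB expression, except that the diffusion produces the quadratic term
`(c²/2) vₓᵀ BBᵀ vₓ`. With `c = -1/λ` and `BBᵀ = λ G R⁻¹ Gᵀ` this is exactly the control term
`-(c/2) vₓᵀ G R⁻¹ Gᵀ vₓ`, hence the linear expression is `c ψ · 0 = 0`.
-/

open Matrix Real

section ExpTransform

variable {E : Type*} [NormedAddCommGroup E] [NormedSpace ℝ E] {v : E → ℝ} {x : E}

theorem fderiv_exp_const_mul (c : ℝ) (hv : DifferentiableAt ℝ v x) :
    fderiv ℝ (fun y => exp (c * v y)) x = (c * exp (c * v x)) • fderiv ℝ v x := by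
  rw [((hv.hasFDerivAt.const_mul c).exp).fderiv, smul_smul, mul_comm]

theorem fderiv_fderiv_exp_const_mul_apply (c : ℝ) (u w : E) (hv : Differentiable ℝ v)
    (hw : DifferentiableAt ℝ (fun y => fderiv ℝ v y w) x) :
    fderiv ℝ (fun y => fderiv ℝ (fun z => exp (c * v z)) y w) x u =
      c ^ 2 * exp (c * v x) * (fderiv ℝ v x u * fderiv ℝ v x w)
        + c * exp (c * v x) * fderiv ℝ (fun y => fderiv ℝ v y w) x u := by
  have hD : (fun y => fderiv ℝ (fun z => exp (c * v z)) y w)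
      = fun y => c * (exp (c * v y) * fderiv ℝ v y w) := by
    funext y
    rw [fderiv_exp_const_mul c (hv y), _root_.smul_apply, smul_eq_mul, mul_assoc]
  have hexp : DifferentiableAt ℝ (fun y => exp (c * v y)) x :=
    ((hv x).const_mul c).exp
  rw [hD, ((hexp.hasFDerivAt.fun_mul hw.hasFDerivAt).const_mul c).fderiv,
    fderiv_exp_const_mul c (hv x)]
  simp only [_root_.smul_apply, _root_.add_apply, smul_eq_mul]
  ring

end ExpTransform

theorem trace_vecMulVec_mul {ι α : Type*} [Fintype ι] [CommSemiring α] (a b : ι → α)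
    (S : Matrix ι ι α) : trace (vecMulVec a b * S) = b ⬝ᵥ (S *ᵥ a) := by
  rw [vecMulVec_mul, trace_vecMulVec, dotProduct_mulVec, dotProduct_comm]

theorem exp_transform_generator_eq {ι : Type*} [Fintype ι] (lam p q : ℝ) (a f : ι → ℝ)
    (H M S : Matrix ι ι ℝ) (hS : lam • M = S) :
    -(1 / lam) * q * p + f ⬝ᵥ ((-lam⁻¹ * p) • a)
        + (1 / 2) * trace ((((-lam⁻¹) ^ 2 * p) • vecMulVec a a + (-lam⁻¹ * p) • H) * S)
      = -lam⁻¹ * p * (q + a ⬝ᵥ f - (1 / 2) * (a ⬝ᵥ (M *ᵥ a)) + (1 / 2) * trace (H * S)) := by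
  rw [add_mul, smul_mul, smul_mul, trace_add, trace_smul, trace_smul, trace_vecMulVec_mul,
    ← hS, smul_mulVec, dotProduct_smul, dotProduct_smul, dotProduct_comm f, smul_eq_mul,
    smul_eq_mul, smul_eq_mul, smul_eq_mul]
  -- holds for every `lam`, as `0⁻¹ = 0`
  have hinv : lam⁻¹ * lam * lam⁻¹ = lam⁻¹ := by
    simpa only [inv_inv] using mul_inv_mul_cancel lam⁻¹
  linear_combination (1 / 2) * p * (a ⬝ᵥ (M *ᵥ a)) * hinv

theorem desirability_linear_pde_general {n m : ℕ}
    (q : (Fin n → ℝ) → ℝ) (f : (Fin n → ℝ) → (Fin n → ℝ))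
    (G B : (Fin n → ℝ) → Matrix (Fin n) (Fin m) ℝ)
    (R : (Fin n → ℝ) → Matrix (Fin m) (Fin m) ℝ)
    (lam : ℝ)
    (hcompat : ∀ x, lam • (G x * (R x)⁻¹ * (G x)ᵀ) = B x * (B x)ᵀ)
    (v : (Fin n → ℝ) → ℝ) (hv : ContDiff ℝ 2 v)
    (vx : (Fin n → ℝ) → (Fin n → ℝ))
    (vxx : (Fin n → ℝ) → Matrix (Fin n) (Fin n) ℝ)
    (hvx : ∀ x i, vx x i = fderiv ℝ v x (Pi.single i 1))
    (hvxx : ∀ x i j, vxx x i j =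
      fderiv ℝ (fun y => fderiv ℝ v y (Pi.single j 1)) x (Pi.single i 1))
    (hPDE : ∀ x, 0 = q x + vx x ⬝ᵥ f x
        - (1/2) * (vx x ⬝ᵥ ((G x * (R x)⁻¹ * (G x)ᵀ) *ᵥ vx x))
        + (1/2) * Matrix.trace (vxx x * (B x * (B x)ᵀ)))
    (ψ : (Fin n → ℝ) → ℝ) (hψ : ψ = fun x => Real.exp (-(v x)/lam))
    (ψx : (Fin n → ℝ) → (Fin n → ℝ))
    (ψxx : (Fin n → ℝ) → Matrix (Fin n) (Fin n) ℝ)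
    (hψx : ∀ x i, ψx x i = fderiv ℝ ψ x (Pi.single i 1))
    (hψxx : ∀ x i j, ψxx x i j =
      fderiv ℝ (fun y => fderiv ℝ ψ y (Pi.single j 1)) x (Pi.single i 1)) :
    ∀ x, 0 = -(1/lam) * q x * ψ x + f x ⬝ᵥ ψx x
        + (1/2) * Matrix.trace (ψxx x * (B x * (B x)ᵀ)) := by
  intro x
  replace hψ : ψ = fun y => exp (-lam⁻¹ * v y) := by
    rw [hψ]
    funext y
    rw [neg_div, div_eq_inv_mul, neg_mul]
  have hv₁ : Differentiable ℝ v := hv.differentiable two_ne_zero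
  have hvx_diff (j : Fin n) : Differentiable ℝ (fun y => fderiv ℝ v y (Pi.single j 1)) :=
    ((hv.fderiv_right le_rfl).differentiable one_ne_zero).clm_apply (differentiable_const _)
  have hgrad : ψx x = (-lam⁻¹ * ψ x) • vx x := by
    ext i
    simp only [hψx, hψ, fderiv_exp_const_mul _ (hv₁ x), hvx, Pi.smul_apply, _root_.smul_apply,
      smul_eq_mul]
  have hhess :
      ψxx x = ((-lam⁻¹) ^ 2 * ψ x) • vecMulVec (vx x) (vx x) + (-lam⁻¹ * ψ x) • vxx x := by
    ext i j
    rw [hψxx, hψ, fderiv_fderiv_exp_const_mul_apply _ _ _ hv₁ (hvx_diff j x)]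
    simp only [hvx, hvxx, vecMulVec_apply, Matrix.add_apply, Matrix.smul_apply, smul_eq_mul]
  rw [hgrad, hhess, exp_transform_generator_eq _ _ _ _ _ _ _ _ (hcompat x), ← hPDE x, mul_zero]

/-- If `v` is C² and satisfies the nonlinear HJB PDE, and `λ > 0` satisfies the
compatibility condition `λ G R⁻¹ G' = BB'`, then the desirability function
`ψ = exp(-v/λ)` satisfies the linear PDE
`0 = -(1/λ) q ψ + f'ψₓ + (1/2) tr(ψ_xx BB')`. -/
theorem desirability_linear_pde {n m : ℕ}
    (q : (Fin n → ℝ) → ℝ) (f : (Fin n → ℝ) → (Fin n → ℝ))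
    (G B : (Fin n → ℝ) → Matrix (Fin n) (Fin m) ℝ)
    (R : (Fin n → ℝ) → Matrix (Fin m) (Fin m) ℝ)
    (hRsymm : ∀ x, (R x).IsSymm) (hRpd : ∀ x, (R x).PosDef)
    (lam : ℝ) (hlam : 0 < lam)
    (hcompat : ∀ x, lam • (G x * (R x)⁻¹ * (G x)ᵀ) = B x * (B x)ᵀ)
    (v : (Fin n → ℝ) → ℝ) (hv : ContDiff ℝ 2 v)
    (vx : (Fin n → ℝ) → (Fin n → ℝ))
    (vxx : (Fin n → ℝ) → Matrix (Fin n) (Fin n) ℝ)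
    (hvx : ∀ x i, vx x i = fderiv ℝ v x (Pi.single i 1))
    (hvxx : ∀ x i j, vxx x i j =
      fderiv ℝ (fun y => fderiv ℝ v y (Pi.single j 1)) x (Pi.single i 1))
    (hPDE : ∀ x, 0 = q x + vx x ⬝ᵥ f x
        - (1/2) * (vx x ⬝ᵥ ((G x * (R x)⁻¹ * (G x)ᵀ) *ᵥ vx x))
        + (1/2) * Matrix.trace (vxx x * (B x * (B x)ᵀ)))
    (ψ : (Fin n → ℝ) → ℝ) (hψ : ψ = fun x => Real.exp (-(v x)/lam))
    (ψx : (Fin n → ℝ) → (Fin n → ℝ))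
    (ψxx : (Fin n → ℝ) → Matrix (Fin n) (Fin n) ℝ)
    (hψx : ∀ x i, ψx x i = fderiv ℝ ψ x (Pi.single i 1))
    (hψxx : ∀ x i j, ψxx x i j =
      fderiv ℝ (fun y => fderiv ℝ ψ y (Pi.single j 1)) x (Pi.single i 1)) :
    ∀ x, 0 = -(1/lam) * q x * ψ x + f x ⬝ᵥ ψx x
        + (1/2) * Matrix.trace (ψxx x * (B x * (B x)ᵀ)) :=
  desirability_linear_pde_general q f G B R lam hcompat v hv vx vxx hvx hvxx hPDE ψ hψ ψx ψxx hψx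
    hψxx
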